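/- arXiv:1111.1128 — 6 statements merged into one kernel-verified Lean document; each statement's English description precedes it below -/
import Mathlib

section
/- For every real y ≥ π and each j ∈ {0, 1, 2}, the series ∑_{n=2}^∞ n^(2j+4) exp(-n^2 y) converges and satisfies ∑_{n=2}^∞ n^(2j+4) exp(-n^2 y) < 2^(2j+4) e^(-4y) C_j(y), where C_j(y) = (1 - 2^(j+2) e^(-2y))^(-1). -/
/-! The terms `a n = (n + 2) ^ (2j + 4) e^{-(n + 2)^2 y}` decay faster than a geometric sequence of
ratio `q = 2 ^ (j + 2) e^{-2y}`: for `x ≥ 2` one has `((x + 1) / x) ^ 2 ≤ 9 / 4` and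
`(x + 1) ^ 2 - x ^ 2 ≥ 5`, so `a (n + 1) / a n ≤ (9 / 4) ^ (j + 2) e^{-5y}`, which is below `q` as soon as
`(9 / 8) ^ (j + 2) < e^{3y}`. Comparing with `a 0 ∑ qⁿ = 2 ^ (2j + 4) e^{-4y} (1 - q)⁻¹` gives the
bound, strictly because already the second terms differ. -/

open Real

theorem summable_and_tsum_lt_of_succ_lt_mul {f : ℕ → ℝ} {q : ℝ} (hf : ∀ n, 0 ≤ f n)
    (hq₀ : 0 ≤ q) (hq₁ : q < 1) (h : ∀ n, f (n + 1) < q * f n) :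
    Summable f ∧ ∑' n, f n < f 0 * (1 - q)⁻¹ := by
  have hle : ∀ n, f n ≤ q ^ n * f 0 := fun n => le_geom hq₀ n fun k _ => (h k).le
  have hgeom : Summable fun n => q ^ n * f 0 := (summable_geometric_of_lt_one hq₀ hq₁).mul_right _
  refine ⟨.of_nonneg_of_le hf hle hgeom, ?_⟩
  calc ∑' n, f n < ∑' n, q ^ n * f 0 :=
        Summable.tsum_lt_tsum_of_nonneg (i := 1) hf hle (by simpa using h 0) hgeom
    _ = f 0 * (1 - q)⁻¹ := by
        rw [tsum_mul_right, tsum_geometric_of_lt_one hq₀ hq₁, mul_comm]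

theorem add_one_pow_mul_exp_neg_sq_lt {x y : ℝ} {m : ℕ} (hx : 2 ≤ x)
    (hm : (9 / 8 : ℝ) ^ m < exp (3 * y)) :
    (x + 1) ^ (2 * m) * exp (-(x + 1) ^ 2 * y)
      < 2 ^ m * exp (-2 * y) * (x ^ (2 * m) * exp (-x ^ 2 * y)) := by
  have hy : 0 < y := by
    have := (one_le_pow₀ (by norm_num : (1 : ℝ) ≤ 9 / 8) (n := m)).trans_lt hm
    rw [← exp_zero, exp_lt_exp] at this
    linarith
  have hpow : (x + 1) ^ (2 * m) ≤ (9 / 4) ^ m * x ^ (2 * m) := by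
    rw [pow_mul, pow_mul, ← mul_pow]
    gcongr
    nlinarith
  have hexp : exp (-(x + 1) ^ 2 * y) ≤ exp (-5 * y) * exp (-x ^ 2 * y) := by
    rw [← exp_add]
    gcongr
    nlinarith
  have hconst : (9 / 4 : ℝ) ^ m * exp (-5 * y) < 2 ^ m * exp (-2 * y) := by
    have hsplit : exp (-2 * y) = exp (3 * y) * exp (-5 * y) := by rw [← exp_add]; ring_nf
    rw [hsplit, show (9 / 4 : ℝ) = 2 * (9 / 8) by norm_num, mul_pow, mul_assoc]
    gcongr
  calc (x + 1) ^ (2 * m) * exp (-(x + 1) ^ 2 * y)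
      ≤ (9 / 4) ^ m * x ^ (2 * m) * (exp (-5 * y) * exp (-x ^ 2 * y)) := by
        gcongr
    _ = (9 / 4) ^ m * exp (-5 * y) * (x ^ (2 * m) * exp (-x ^ 2 * y)) := by ring
    _ < 2 ^ m * exp (-2 * y) * (x ^ (2 * m) * exp (-x ^ 2 * y)) := by
        gcongr

theorem stmt_2 (y : ℝ) (hy : Real.pi ≤ y) (j : ℕ) (hj : j ∈ ({0, 1, 2} : Set ℕ)) :
    Summable (fun n : ℕ => ((n : ℝ) + 2)^(2*j+4) * Real.exp (-((n : ℝ) + 2)^2 * y)) ∧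
    (∑' n : ℕ, ((n : ℝ) + 2)^(2*j+4) * Real.exp (-((n : ℝ) + 2)^2 * y))
      < 2^(2*j+4) * Real.exp (-4*y) * (1 - 2^(j+2) * Real.exp (-2*y))⁻¹ := by
  have hj2 : j ≤ 2 := by
    simp only [Set.mem_insert_iff, Set.mem_singleton_iff] at hj
    omega
  have hy3 : 3 < y := pi_gt_three.trans_le hy
  have hpow : (2 : ℝ) ^ (j + 2) ≤ 2 ^ 4 := pow_le_pow_right₀ (by norm_num) (by omega)
  have hq : (2 : ℝ) ^ (j + 2) * exp (-2 * y) < 1 := by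
    have : (y + 1) ^ 2 < exp y ^ 2 := by gcongr; exact add_one_lt_exp (by positivity)
    rw [neg_mul, exp_neg, ← div_eq_mul_inv, div_lt_one (exp_pos _), two_mul, exp_add]
    nlinarith
  have hratio : (9 / 8 : ℝ) ^ (j + 2) < exp (3 * y) := by
    have : (9 / 8 : ℝ) ^ (j + 2) ≤ (9 / 8) ^ 4 := pow_le_pow_right₀ (by norm_num) (by omega)
    linarith [add_one_le_exp (3 * y)]
  have hseries := summable_and_tsum_lt_of_succ_lt_mul
    (f := fun n : ℕ => ((n : ℝ) + 2) ^ (2 * j + 4) * exp (-((n : ℝ) + 2) ^ 2 * y))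
    (fun n => by positivity) (by positivity) hq fun n => by
      have := add_one_pow_mul_exp_neg_sq_lt (x := (n : ℝ) + 2)
        (by linarith [n.cast_nonneg (α := ℝ)]) hratio
      rw [show 2 * j + 4 = 2 * (j + 2) by ring]
      push_cast
      convert this using 3 <;> ring
  refine ⟨hseries.1, hseries.2.trans_eq ?_⟩
  norm_num
end

section
/- For every real y ≥ π and each j ∈ {0, 1, 2}, the series Υ_j(y) = e^y ∑_{n=2}^∞ n^2 p_{j+1}(n^2 y) exp(-n^2 y) converges absolutely and satisfies |Υ_j(y)| < 2^(4j+5) C_j(y) y^(j+1) e^(-3y), where C_j(y) = (1 - 2^(j+2) e^(-2y))^(-1). -/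
/-- The first three Csordas–Varga polynomials, `cvp k` being `p_k` for `k = 1, 2, 3`. -/
noncomputable def cvp : ℕ → ℝ → ℝ
  | 1, y => 2*y - 3
  | 2, y => -15 + 30*y - 8*y^2
  | 3, y => -75 + 330*y - 224*y^2 + 32*y^3
  | _, _ => 0

/-! For `x ≥ 2` the polynomial `p_{j+1}` is dominated by its leading term:
`|p_{j+1}(x)| < 2^(2j+1) x^(j+1)`. With `m = n + 2`, the crude bound `m² ≤ 2^(m+n)` and `2 ≤ e`
turn the `n`-th term into strictly less than `2^(4j+5) y^(j+1) e^(-3y) r^n`, where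
`r = 2^(j+2) e^(-2y) < 1`; summing this geometric series gives both claims. -/

open Real

lemma abs_cvp_lt {j : ℕ} (hj : j ≤ 2) {x : ℝ} (hx : 2 ≤ x) :
    |cvp (j + 1) x| < 2 ^ (2 * j + 1) * x ^ (j + 1) := by
  interval_cases j <;>
  · rw [abs_lt]
    have h := sub_nonneg.2 hx
    constructor <;> (simp only [cvp]; norm_num) <;>
      nlinarith [mul_nonneg (mul_nonneg h h) h, mul_nonneg h h]

lemma two_pow_le_exp (k : ℕ) : (2 : ℝ) ^ k ≤ exp k := by
  rw [← exp_one_pow]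
  exact pow_le_pow_left₀ zero_le_two exp_one_gt_two.le k

lemma two_pow_mul_exp_neg_lt_one {k : ℕ} {y : ℝ} (hk : (k : ℝ) < 2 * y) :
    2 ^ k * exp (-2 * y) < 1 := by
  calc 2 ^ k * exp (-2 * y) ≤ exp k * exp (-2 * y) := by gcongr; exact two_pow_le_exp k
    _ = exp (k - 2 * y) := by rw [← exp_add]; ring_nf
    _ < 1 := exp_lt_one_iff.mpr (by linarith)

lemma add_two_sq_le (n : ℕ) : ((n : ℝ) + 2) ^ 2 ≤ 2 ^ (n + 2) * 2 ^ n := by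
  have h : n + 2 ≤ 2 ^ (n + 1) := Nat.lt_two_pow_self
  have : (n + 2) ^ 2 ≤ 2 ^ (n + 2) * 2 ^ n := by
    calc (n + 2) ^ 2 ≤ (2 ^ (n + 1)) ^ 2 := Nat.pow_le_pow_left h 2
      _ = 2 ^ (n + 2) * 2 ^ n := by ring
  exact_mod_cast this

lemma add_two_sq_pow_le {k : ℕ} {y : ℝ} (hk : (k : ℝ) ≤ 2 * y) (n : ℕ) :
    (((n : ℝ) + 2) ^ 2) ^ k ≤ 2 ^ (k * (n + 2)) * exp (n * (n + 2) * y) := by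
  have hn : (0 : ℝ) ≤ n := n.cast_nonneg
  calc (((n : ℝ) + 2) ^ 2) ^ k ≤ (2 ^ (n + 2) * 2 ^ n) ^ k := by gcongr; exact add_two_sq_le n
    _ = 2 ^ (k * (n + 2)) * 2 ^ (k * n) := by rw [mul_pow, ← pow_mul, ← pow_mul]; ring_nf
    _ ≤ 2 ^ (k * (n + 2)) * exp ↑(k * n) := by gcongr; exact two_pow_le_exp _
    _ ≤ 2 ^ (k * (n + 2)) * exp (n * (n + 2) * y) := by
        gcongr
        push_cast
        have hy : 0 ≤ y := by linarith [k.cast_nonneg (α := ℝ)]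
        nlinarith [mul_le_mul_of_nonneg_left hk hn, mul_nonneg (mul_nonneg hn hn) hy]

lemma abs_term_lt {j : ℕ} (hj : j ≤ 2) {m y : ℝ} (hx : 2 ≤ m ^ 2 * y) :
    |exp y * (m ^ 2 * cvp (j + 1) (m ^ 2 * y) * exp (-m ^ 2 * y))|
      < 2 ^ (2 * j + 1) * y ^ (j + 1) * ((m ^ 2) ^ (j + 2) * exp ((1 - m ^ 2) * y)) := by
  have hm : 0 < m ^ 2 := (sq_nonneg m).lt_of_ne fun h => by rw [← h] at hx; linarith
  calc |exp y * (m ^ 2 * cvp (j + 1) (m ^ 2 * y) * exp (-m ^ 2 * y))|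
      = m ^ 2 * |cvp (j + 1) (m ^ 2 * y)| * (exp y * exp (-m ^ 2 * y)) := by
        rw [abs_mul, abs_mul, abs_mul, abs_of_pos (exp_pos _), abs_of_pos (exp_pos _),
          abs_of_pos hm]
        ring
    _ < m ^ 2 * (2 ^ (2 * j + 1) * (m ^ 2 * y) ^ (j + 1)) * (exp y * exp (-m ^ 2 * y)) := by
        gcongr
        exact abs_cvp_lt hj hx
    _ = _ := by rw [← exp_add, mul_pow]; ring_nf

lemma abs_term_lt_geometric {j : ℕ} (hj : j ≤ 2) {y : ℝ} (hy : 3 ≤ y) (n : ℕ) :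
    |exp y * (((n : ℝ) + 2) ^ 2 * cvp (j + 1) (((n : ℝ) + 2) ^ 2 * y)
        * exp (-((n : ℝ) + 2) ^ 2 * y))|
      < 2 ^ (4 * j + 5) * y ^ (j + 1) * exp (-3 * y) * (2 ^ (j + 2) * exp (-2 * y)) ^ n := by
  have hn : (0 : ℝ) ≤ n := n.cast_nonneg
  have hj' : ((j + 2 : ℕ) : ℝ) ≤ 2 * y := by
    have : (j : ℝ) ≤ 2 := by exact_mod_cast hj
    push_cast; linarith
  have hexp : exp (n * (n + 2) * y) * exp ((1 - ((n : ℝ) + 2) ^ 2) * y)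
      = exp (-3 * y) * exp (-2 * y) ^ n := by
    rw [← exp_nat_mul, ← exp_add, ← exp_add]; ring_nf
  refine (abs_term_lt hj (by nlinarith)).trans_le ?_
  calc _ ≤ 2 ^ (2 * j + 1) * y ^ (j + 1) * (2 ^ ((j + 2) * (n + 2)) * exp (n * (n + 2) * y)
        * exp ((1 - ((n : ℝ) + 2) ^ 2) * y)) := by
        gcongr
        exact add_two_sq_pow_le hj' n
    _ = _ := by rw [mul_assoc (2 ^ ((j + 2) * (n + 2)) : ℝ), hexp, mul_pow, ← pow_mul]; ring

lemma summable_abs_and_abs_tsum_lt_of_lt_geometric {f : ℕ → ℝ} {A r : ℝ} (hr₀ : 0 ≤ r)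
    (hr₁ : r < 1) (hf : ∀ n, |f n| < A * r ^ n) :
    Summable (fun n => |f n|) ∧ |∑' n, f n| < A * (1 - r)⁻¹ := by
  have hg : Summable (fun n => A * r ^ n) := (summable_geometric_of_lt_one hr₀ hr₁).mul_left A
  have hs : Summable (fun n => |f n|) :=
    .of_nonneg_of_le (fun n => abs_nonneg _) (fun n => (hf n).le) hg
  refine ⟨hs, ?_⟩
  calc |∑' n, f n| ≤ ∑' n, |f n| := norm_tsum_le_tsum_norm (f := f) hs
    _ < ∑' n, A * r ^ n := hs.tsum_lt_tsum (fun n => (hf n).le) (hf 0) hg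
    _ = A * (1 - r)⁻¹ := by rw [tsum_mul_left, tsum_geometric_of_lt_one hr₀ hr₁]

theorem stmt_3 (y : ℝ) (hy : Real.pi ≤ y) (j : ℕ) (hj : j ∈ ({0, 1, 2} : Set ℕ)) :
    Summable (fun n : ℕ =>
      |Real.exp y * (((n : ℝ) + 2)^2 * cvp (j+1) (((n : ℝ) + 2)^2 * y)
        * Real.exp (-((n : ℝ) + 2)^2 * y))|) ∧
    |Real.exp y * ∑' n : ℕ, ((n : ℝ) + 2)^2 * cvp (j+1) (((n : ℝ) + 2)^2 * y)
        * Real.exp (-((n : ℝ) + 2)^2 * y)|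
      < 2^(4*j+5) * (1 - 2^(j+2) * Real.exp (-2*y))⁻¹ * y^(j+1) * Real.exp (-3*y) := by
  have hy₃ : 3 ≤ y := pi_gt_three.le.trans hy
  have hj₂ : j ≤ 2 := by
    simp only [Set.mem_insert_iff, Set.mem_singleton_iff] at hj
    omega
  have hr₁ : 2 ^ (j + 2) * exp (-2 * y) < 1 := by
    have : (j : ℝ) ≤ 2 := by exact_mod_cast hj₂
    exact two_pow_mul_exp_neg_lt_one (by push_cast; linarith)
  obtain ⟨hsum, hlt⟩ := summable_abs_and_abs_tsum_lt_of_lt_geometric (by positivity) hr₁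
    (abs_term_lt_geometric hj₂ hy₃)
  refine ⟨hsum, ?_⟩
  rw [← tsum_mul_left]
  linarith
end

section
/- For every integer r ≥ 2, the polynomial W_r(y) = det [(p_{i+j-1}(y))_{i,j=1,…,r}] is divisible by y^(r(r-1)/2); that is, the coefficient of y^j in W_r(y) is zero for every 0 ≤ j ≤ r(r-1)/2 - 1. -/
/-!
Write `L p = 4X p' + (5 - 4X) p`, so that `p_{n+1} = L^n p_1`. In the monomial basis `L` is
triangular, `L (X^a) = (4a + 5) X^a - 4 X^(a+1)`, hence `L - (4a + 5)` raises the `X`-adic order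
of every multiple of `X^a`, and `∏_{i<a} (L - (4i + 5))` maps every polynomial into
`X^a ℝ[X]`. Replacing the `a`-th row `(L^a p_{b+1})_b` of the Hankel matrix by
`(∏_{i<a} (L - (4i + 5)) p_{b+1})_b` is a unitriangular row operation, so the determinant is
unchanged, and the new `a`-th row is divisible by `X^a`. Hence `W_r` is divisible by
`X^(0 + 1 + ⋯ + (r - 1))`.
-/

open Polynomial

/-- The Csordas–Varga polynomials: `cv n` is `p_{n+1}`, where `p_1(y) = 2y - 3` and
`p_{k+1}(y) = 4y p_k'(y) + (5 - 4y) p_k(y)`. -/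
noncomputable def cv : ℕ → Polynomial ℝ
  | 0 => 2 * X - 3
  | (n+1) => 4 * X * (derivative (cv n)) + (5 - 4 * X) * (cv n)

theorem Matrix.prod_dvd_det_of_forall_dvd {n R : Type*} [Fintype n] [DecidableEq n] [CommRing R]
    (M : Matrix n n R) (d : n → R) (h : ∀ i j, d i ∣ M i j) : ∏ i, d i ∣ M.det := by
  choose N hN using h
  have hM : M = Matrix.diagonal d * Matrix.of N := by
    ext i j
    simp [Matrix.diagonal_mul, hN]
  rw [hM, Matrix.det_mul, Matrix.det_diagonal]
  exact dvd_mul_right _ _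

section Hankel

variable {R A : Type*} [CommRing R] [CommRing A] [Algebra R A]

theorem apply_add_eq_pow_apply_of_succ (L : Module.End R A) {f : ℕ → A}
    (hf : ∀ n, f (n + 1) = L (f n)) (i b : ℕ) : f (i + b) = (L ^ i) (f b) := by
  induction i with
  | zero => simp
  | succ i ih => rw [Nat.succ_add, hf, ih, pow_succ', Module.End.mul_apply]

theorem det_hankel_eq_det_aeval_of_monic (L : Module.End R A) {f : ℕ → A}
    (hf : ∀ n, f (n + 1) = L (f n)) {r : ℕ} (q : Fin r → R[X])
    (hdeg : ∀ a, (q a).natDegree = a) (hmonic : ∀ a, (q a).Monic) :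
    (Matrix.of fun a b : Fin r => f (a + b)).det =
      (Matrix.of fun a b : Fin r => aeval L (q a) (f b)).det := by
  set T : Matrix (Fin r) (Fin r) R := Matrix.of fun a i => (q a).coeff i
  have hT : T.det = 1 := by
    rw [← Matrix.det_transpose]
    exact Matrix.det_matrixOfPolynomials q hdeg hmonic
  have hrows : (Matrix.of fun a b : Fin r => aeval L (q a) (f b)) =
      T.map (algebraMap R A) * Matrix.of fun a b : Fin r => f (a + b) := by
    ext a b
    rw [Matrix.of_apply, aeval_eq_sum_range' ((hdeg a).trans_lt a.2), LinearMap.sum_apply,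
      ← Fin.sum_univ_eq_sum_range (fun i => ((q a).coeff i • L ^ i) (f b)) r, Matrix.mul_apply]
    refine Finset.sum_congr rfl fun i _ => ?_
    simp [T, apply_add_eq_pow_apply_of_succ L hf, Algebra.smul_def]
  rw [hrows, Matrix.det_mul, ← RingHom.mapMatrix_apply, ← RingHom.map_det, hT, map_one, one_mul]

end Hankel

noncomputable def cvOp : ℝ[X] →ₗ[ℝ] ℝ[X] :=
  LinearMap.mulLeft ℝ (4 * X) ∘ₗ derivative + LinearMap.mulLeft ℝ (5 - 4 * X)

theorem cvOp_apply (p : ℝ[X]) : cvOp p = 4 * X * derivative p + (5 - 4 * X) * p := rfl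

theorem cv_succ (n : ℕ) : cv (n + 1) = cvOp (cv n) := rfl

theorem X_pow_succ_dvd_cvOp_sub_smul {a : ℕ} {p : ℝ[X]} (h : X ^ a ∣ p) :
    X ^ (a + 1) ∣ cvOp p - (4 * a + 5 : ℝ) • p := by
  obtain ⟨q, rfl⟩ := h
  refine ⟨4 * derivative q - 4 * q, ?_⟩
  have hX : X * derivative (X ^ a : ℝ[X]) = (a : ℝ[X]) * X ^ a := by
    cases a with
    | zero => simp
    | succ a =>
      rw [derivative_X_pow, Nat.add_sub_cancel, map_natCast]
      ring
  rw [cvOp_apply, derivative_mul, smul_eq_C_mul, map_add, map_mul, map_natCast, map_ofNat,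
    map_ofNat]
  linear_combination (4 * q) * hX

theorem X_pow_dvd_aeval_cvOp (a : ℕ) (p : ℝ[X]) :
    X ^ a ∣ aeval cvOp (∏ i ∈ Finset.range a, (X - C (4 * i + 5 : ℝ))) p := by
  induction a with
  | zero => simp
  | succ a ih =>
    rw [Finset.prod_range_succ, mul_comm, map_mul, Module.End.mul_apply, map_sub, aeval_X,
      aeval_C, LinearMap.sub_apply, Module.algebraMap_end_apply]
    exact X_pow_succ_dvd_cvOp_sub_smul ih

theorem stmt_10_general (r : ℕ) (j : ℕ) (hj : j < r * (r-1) / 2) :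
    (Matrix.det (Matrix.of fun a b : Fin r => cv ((a:ℕ) + (b:ℕ)))).coeff j = 0 := by
  have hdet := det_hankel_eq_det_aeval_of_monic cvOp cv_succ
    (fun a : Fin r => ∏ i ∈ Finset.range a, (X - C (4 * i + 5 : ℝ)))
    (by simp only [natDegree_finsetProd_X_sub_C_eq_card, Finset.card_range, implies_true])
    (fun a => monic_prod_of_monic _ _ fun i _ => monic_X_sub_C _)
  have hdvd : X ^ (r * (r - 1) / 2) ∣ (Matrix.of fun a b : Fin r => cv (a + b)).det := by
    rw [hdet, ← Finset.sum_range_id, ← Fin.sum_univ_eq_sum_range,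
      ← Finset.prod_pow_eq_pow_sum]
    exact Matrix.prod_dvd_det_of_forall_dvd _ _ fun a b => X_pow_dvd_aeval_cvOp a (cv b)
  exact X_pow_dvd_iff.mp hdvd j hj

theorem stmt_10 (r : ℕ) (hr : 2 ≤ r) (j : ℕ) (hj : j < r * (r-1) / 2) :
    (Matrix.det (Matrix.of fun a b : Fin r => cv ((a:ℕ) + (b:ℕ)))).coeff j = 0 :=
  stmt_10_general r j hj
end

section
/- Let s_5 and s_9 denote the function s with parameter k = 5 and k = 9 respectively, defined by s(i, j) = 0 if i ≤ 0 or j < 0, s(i, 0) = 1 for i ≥ 1, s(1, j) = k^j for j ≥ 0, and s(i+1, j) = s(i, j) + (k + 4i) · s(i+1, j-1) for i ≥ 1, j ≥ 1. Then for all integers i ≥ 1 and j ≥ 0, the coefficient d(i, i + j) of y^i in p_{i+j}(y) satisfies d(i, i + j) = -3 · (-4)^i · s_5(i + 1, j - 1) + 2 · (-4)^(i-1) · s_9(i, j). -/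
/-!
Write `c a j` for the coefficient of `y^(a+1)` in `p_(a+j+1)`. The recurrence for `p_k` gives
`c (a+1) (j+1) = (4a+13) c (a+1) j - 4 c a (j+1)`, with boundary values `c a 0 = 2 (-4)^a`
(leading coefficients) and `c 0 (j+1) = 9 c 0 j + 12 · 5^j` (constant terms are `-3 · 5^n`).
After dividing by `(-4)^a` this is the recurrence of `s_9` shifted to `i = a + 1`; since the
parameter `5 + 4i` of `s_5` at `i + 1` equals the parameter `9 + 4i` of `s_9` at `i`, the combination
`12 s_5(a+2, j-1) + 2 s_9(a+1, j)` satisfies the same recurrence and boundary values.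
-/

open Polynomial

/-- The defining recurrences for the function `s` with parameter `k`. -/
def SRec (k : ℤ) (s : ℤ × ℤ → ℤ) : Prop :=
  (∀ i j : ℤ, i ≤ 0 → s (i, j) = 0) ∧
  (∀ i j : ℤ, j < 0 → s (i, j) = 0) ∧
  (∀ i : ℤ, 1 ≤ i → s (i, 0) = 1) ∧
  (∀ j : ℕ, s (1, (j : ℤ)) = k ^ j) ∧
  (∀ i j : ℤ, 1 ≤ i → 1 ≤ j → s (i+1, j) = s (i, j) + (k + 4*i) * s (i+1, j-1))

lemma cv_succ_eq (n : ℕ) :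
    cv (n + 1) = C 4 * (X * derivative (cv n)) + (C 5 * cv n - C 4 * (X * cv n)) := by
  rw [cv]; simp only [map_ofNat]; ring

lemma cv_coeff_succ (n i : ℕ) :
    (cv (n + 1)).coeff (i + 1) = (4 * (i + 1) + 5) * (cv n).coeff (i + 1) - 4 * (cv n).coeff i := by
  simp only [cv_succ_eq, coeff_add, coeff_sub, coeff_C_mul, coeff_X_mul, coeff_derivative]
  ring

lemma cv_coeff_zero (n : ℕ) : (cv n).coeff 0 = -3 * 5 ^ n := by
  induction n with
  | zero => simp [cv]
  | succ n ih =>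
    simp only [cv_succ_eq, coeff_add, coeff_sub, mul_coeff_zero, coeff_C_zero, coeff_X_zero, ih]
    ring

lemma cv_coeff_eq_zero_of_lt {n i : ℕ} (h : n + 1 < i) : (cv n).coeff i = 0 := by
  induction n generalizing i with
  | zero =>
    obtain ⟨m, rfl⟩ : ∃ m, i = m + 2 := ⟨i - 2, by omega⟩
    simp [cv, coeff_X]
  | succ n ih =>
    obtain ⟨m, rfl⟩ : ∃ m, i = m + 1 := ⟨i - 1, by omega⟩
    rw [cv_coeff_succ, ih (by omega), ih (by omega)]
    ring

lemma cv_coeff_succ_self (n : ℕ) : (cv n).coeff (n + 1) = 2 * (-4) ^ n := by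
  induction n with
  | zero => simp [cv, coeff_X]
  | succ n ih =>
    rw [cv_coeff_succ, cv_coeff_eq_zero_of_lt (by omega), ih]
    ring

lemma cv_coeff_one_succ (n : ℕ) : (cv (n + 1)).coeff 1 = 9 * (cv n).coeff 1 + 12 * 5 ^ n := by
  rw [cv_coeff_succ n 0, cv_coeff_zero]
  ring

theorem cv_coeff_eq_neg_four_pow_mul {v : ℕ → ℕ → ℝ} (hv₀ : ∀ a, v a 0 = 2)
    (hv₁ : ∀ j, v 0 (j + 1) = 9 * v 0 j + 12 * 5 ^ j)
    (hv : ∀ a j, v (a + 1) (j + 1) = v a (j + 1) + (4 * a + 13) * v (a + 1) j) (a j : ℕ) :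
    (cv (a + j)).coeff (a + 1) = (-4) ^ a * v a j := by
  induction j generalizing a with
  | zero => rw [hv₀, add_zero, cv_coeff_succ_self]; ring
  | succ j ihj =>
    induction a with
    | zero =>
      have h0 : (cv j).coeff 1 = v 0 j := by simpa using ihj 0
      rw [zero_add, cv_coeff_one_succ, h0, hv₁]
      ring
    | succ a iha =>
      rw [show a + 1 + (j + 1) = a + 1 + j + 1 by omega, cv_coeff_succ, ihj (a + 1),
        show a + 1 + j = a + (j + 1) by omega, iha, hv]
      push_cast
      ring

namespace SRec

variable {k : ℤ} {s : ℤ × ℤ → ℤ}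

lemma apply_of_neg (h : SRec k s) (i : ℤ) {j : ℤ} (hj : j < 0) : s (i, j) = 0 := h.2.1 i j hj

lemma apply_zero (h : SRec k s) {i : ℤ} (hi : 1 ≤ i) : s (i, 0) = 1 := h.2.2.1 i hi

lemma apply_one (h : SRec k s) (j : ℕ) : s (1, j) = k ^ j := h.2.2.2.1 j

lemma step (h : SRec k s) {i j : ℤ} (hi : 1 ≤ i) (hj : 0 ≤ j) :
    s (i + 1, j) = s (i, j) + (k + 4 * i) * s (i + 1, j - 1) := by
  rcases hj.eq_or_lt with rfl | hj
  · rw [h.apply_zero hi, h.apply_zero (by omega), h.apply_of_neg _ (by omega)]; ring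
  · exact h.2.2.2.2 i j hi hj

end SRec

def sComb (s5 s9 : ℤ × ℤ → ℤ) (a j : ℕ) : ℤ :=
  12 * s5 ((a : ℤ) + 2, (j : ℤ) - 1) + 2 * s9 ((a : ℤ) + 1, j)

section sComb

variable {s5 s9 : ℤ × ℤ → ℤ}

lemma sComb_zero_right (h5 : SRec 5 s5) (h9 : SRec 9 s9) (a : ℕ) : sComb s5 s9 a 0 = 2 := by
  rw [sComb, h5.apply_of_neg _ (by omega), Nat.cast_zero, h9.apply_zero (by omega)]; ring

lemma sComb_zero_succ (h5 : SRec 5 s5) (h9 : SRec 9 s9) (j : ℕ) :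
    sComb s5 s9 0 (j + 1) = 9 * sComb s5 s9 0 j + 12 * 5 ^ j := by
  have h5j := h5.step (i := 1) (j := j) le_rfl (by omega)
  have h9j := h9.apply_one (j + 1)
  simp only [sComb, Nat.cast_zero, Nat.cast_succ, zero_add, add_sub_cancel_right] at h5j h9j ⊢
  rw [show (1 : ℤ) + 1 = 2 by norm_num] at h5j
  rw [h5j, h5.apply_one, h9j, h9.apply_one]
  ring

lemma sComb_succ_succ (h5 : SRec 5 s5) (h9 : SRec 9 s9) (a j : ℕ) :
    sComb s5 s9 (a + 1) (j + 1) = sComb s5 s9 a (j + 1) + (4 * a + 13) * sComb s5 s9 (a + 1) j := by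
  have h5a := h5.step (i := (a : ℤ) + 2) (j := j) (by omega) (by omega)
  have h9a := h9.step (i := (a : ℤ) + 1) (j := (j : ℤ) + 1) (by omega) (by omega)
  simp only [sComb, Nat.cast_succ, add_sub_cancel_right] at h5a h9a ⊢
  rw [show (a : ℤ) + 1 + 2 = a + 2 + 1 by ring, h5a, show (a : ℤ) + 1 + 1 = a + 1 + 1 by ring, h9a]
  ring

end sComb

theorem stmt_15 (s5 s9 : ℤ × ℤ → ℤ) (h5 : SRec 5 s5) (h9 : SRec 9 s9) :
    ∀ i j : ℕ, 1 ≤ i →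
      (cv (i + j - 1)).coeff i
        = -3 * (-4 : ℝ)^i * ((s5 ((i : ℤ) + 1, (j : ℤ) - 1) : ℤ) : ℝ)
          + 2 * (-4 : ℝ)^(i-1) * ((s9 ((i : ℤ), (j : ℤ)) : ℤ) : ℝ) := by
  intro i j hi
  obtain ⟨a, rfl⟩ : ∃ a, i = a + 1 := ⟨i - 1, by omega⟩
  have h := cv_coeff_eq_neg_four_pow_mul (v := fun a j ↦ (sComb s5 s9 a j : ℝ))
    (fun a ↦ by simp [sComb_zero_right h5 h9])
    (fun j ↦ by simp [sComb_zero_succ h5 h9])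
    (fun a j ↦ by simp [sComb_succ_succ h5 h9]) a j
  rw [show a + 1 + j - 1 = a + j by omega, show ((a + 1 : ℕ) : ℤ) + 1 = a + 2 by omega, h, sComb,
    Nat.add_sub_cancel]
  push_cast
  ring
end

section
/- Fix an integer r ≥ 2. For integers n > r define Δ(n, r) = det [((2n)! / (2(n + j - i))!)]_{i,j=1,…,r}, g(i, n) = (2n + 2i)(2n + 2i - 1), and the normalization Δ̄(n, r) = (2n)^(-r(r-1)) · (∏_{i=1}^{r-1} g(i, n)^(r-i)) · Δ(n, r). Then there exists a polynomial P with rational coefficients of degree at most r(r-1), whose coefficient of X^i vanishes for every 0 ≤ i ≤ r(r-1)/2 - 1, such that Δ̄(n, r) = P(1/(2n)) for every integer n > r. -/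
/-!
Multiplying column `b` of the matrix by `(2n + 2b)! / (2n)! = ∏_{i ≤ b} g(i, n)` turns the entry
`(a, b)` into `(2(n+b-a) + 1) ⋯ (2(n+b-a) + 2a) = p_a(2n + 2b + 1 - 2a)`, where `p_a` is the
rising factorial polynomial of degree `2a`. Hence `∏ g(i, n)^(r-i) · Δ(n, r) = D(2n)` for a
polynomial `D` of naive degree `r(r-1)`. Replacing column `b` by the `b`-th forward difference
of the columns `0, …, b` (a unitriangular column operation) lowers the degree of each of its
entries by `b`, so `deg D ≤ r(r-1)/2`. The reversal `P` of `D` in degree `r(r-1)` then satisfies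
`Δ̄(n, r) = (2n)^(-r(r-1)) D(2n) = P(1/(2n))`, and its low coefficients vanish.
-/

open Polynomial Finset
open scoped Nat

section DeterminantDegree

variable {R : Type*} [CommRing R] {ι : Type*} [Fintype ι] [DecidableEq ι]

theorem Polynomial.natDegree_det_le_of_natDegree_le (M : Matrix ι ι R[X]) (u : ι → ℕ)
    (h : ∀ i j, (M i j).natDegree ≤ u i) : M.det.natDegree ≤ ∑ i, u i := by
  rw [Matrix.det_apply]
  refine natDegree_sum_le_of_forall_le _ _ fun σ _ => (natDegree_smul_le _ _).trans ?_
  calc (∏ i, M (σ i) i).natDegree ≤ ∑ i, (M (σ i) i).natDegree := natDegree_prod_le _ _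
    _ ≤ ∑ i, u (σ i) := sum_le_sum fun i _ => h _ _
    _ = ∑ i, u i := Equiv.sum_comp σ u

theorem Polynomial.natDegree_det_le_of_coeff_eq_zero (M : Matrix ι ι R[X]) (u v : ι → ℕ)
    (h : ∀ i j m, u i < m + v j → (M i j).coeff m = 0) :
    M.det.natDegree ≤ ∑ i, u i - ∑ j, v j := by
  have hscaled : (Matrix.of fun i j => X ^ v j * M i j).det.natDegree ≤ ∑ i, u i := by
    refine natDegree_det_le_of_natDegree_le _ u fun i j =>
      natDegree_le_iff_coeff_eq_zero.mpr fun m hm => ?_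
    rw [Matrix.of_apply, coeff_X_pow_mul']
    split_ifs with hvm
    · exact h i j _ (by omega)
    · rfl
  rw [Matrix.det_mul_row, prod_pow_eq_pow_sum] at hscaled
  refine natDegree_le_iff_coeff_eq_zero.mpr fun m hm => ?_
  rw [← coeff_X_pow_mul _ (∑ j, v j)]
  exact coeff_eq_zero_of_natDegree_lt (by omega)

end DeterminantDegree

section ForwardDifference

def fwdDiffMatrix (R : Type*) [Ring R] (r : ℕ) : Matrix (Fin r) (Fin r) R :=
  Matrix.of fun k b => (-1) ^ ((b : ℕ) - k) * ((b : ℕ).choose k : R)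

variable {R : Type*} [CommRing R]

theorem Polynomial.fwdDiff_iter_coeff_taylor_eq_zero (p : R[X]) (c h : R) {m b : ℕ}
    (hlt : p.natDegree < m + b) :
    (fwdDiff 1)^[b] (fun t => (taylor (c + t * h) p).coeff m) = 0 := by
  rcases b.eq_zero_or_pos with rfl | hb
  · funext t
    exact coeff_eq_zero_of_natDegree_lt ((natDegree_taylor p _).trans_lt hlt)
  have hcoeff : (fun t => (taylor (c + t * h) p).coeff m)
      = fun t => ((hasseDeriv m p).comp (C h * X + C c)).eval t := by
    funext t
    simp only [taylor_coeff, eval_comp, eval_add, eval_mul, eval_C, eval_X, add_comm c, mul_comm h]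
  rw [hcoeff]
  refine fwdDiff_iter_eq_zero_of_degree_lt ?_
  calc ((hasseDeriv m p).comp (C h * X + C c)).natDegree
      ≤ (hasseDeriv m p).natDegree * (C h * X + C c).natDegree := natDegree_comp_le
    _ ≤ (p.natDegree - m) * 1 := Nat.mul_le_mul (natDegree_hasseDeriv_le p m) natDegree_linear_le
    _ < b := by omega

theorem det_fwdDiffMatrix (r : ℕ) : (fwdDiffMatrix R r).det = 1 := by
  have hupper : (fwdDiffMatrix R r).IsUpperTriangular := fun k b hbk => by
    simp [fwdDiffMatrix, Nat.choose_eq_zero_of_lt (show (b : ℕ) < k from hbk)]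
  rw [Matrix.det_of_isUpperTriangular hupper]
  exact prod_eq_one fun k _ => by simp [fwdDiffMatrix]

theorem sum_mul_fwdDiffMatrix {r : ℕ} (f : R → R) (b : Fin r) :
    ∑ k : Fin r, f k * fwdDiffMatrix R r k b = (fwdDiff 1)^[b] f 0 := by
  simp only [fwdDiffMatrix, Matrix.of_apply]
  rw [fwdDiff_iter_eq_sum_shift, Fin.sum_univ_eq_sum_range
    (fun k => f k * ((-1) ^ ((b : ℕ) - k) * ((b : ℕ).choose k : R))) r]
  have hsub : range ((b : ℕ) + 1) ⊆ range r := range_subset_range.mpr b.isLt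
  rw [← sum_subset hsub fun k _ hk => by
    simp [Nat.choose_eq_zero_of_lt (show (b : ℕ) < k by simpa using hk)]]
  refine sum_congr rfl fun k _ => ?_
  simp only [zero_add, nsmul_eq_mul, mul_one, zsmul_eq_mul]
  push_cast
  ring

theorem natDegree_det_taylor_le {r : ℕ} (p : Fin r → R[X]) (c : Fin r → R) (h : R) :
    (Matrix.of fun a b : Fin r => taylor (c a + (b : ℕ) * h) (p a)).det.natDegree
      ≤ ∑ a, (p a).natDegree - r * (r - 1) / 2 := by
  set M := Matrix.of fun a b : Fin r => taylor (c a + (b : ℕ) * h) (p a)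
  have hdet : M.det = (M * (fwdDiffMatrix R r).map C).det := by
    rw [Matrix.det_mul, ← RingHom.mapMatrix_apply, ← RingHom.map_det, det_fwdDiffMatrix,
      map_one, mul_one]
  have hcols : ∑ b : Fin r, (b : ℕ) = r * (r - 1) / 2 := by
    rw [Fin.sum_univ_eq_sum_range (fun b => b), sum_range_id]
  rw [hdet, ← hcols]
  refine natDegree_det_le_of_coeff_eq_zero _ _ _ fun a b m hm => ?_
  simp only [Matrix.mul_apply, Matrix.map_apply, finsetSum_coeff, coeff_mul_C, M,
    Matrix.of_apply]
  rw [sum_mul_fwdDiffMatrix (fun t => (taylor (c a + t * h) (p a)).coeff m),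
    fwdDiff_iter_coeff_taylor_eq_zero _ _ _ hm]
  rfl

end ForwardDifference

theorem Nat.factorial_mul_prod_consecutive_pairs (s b : ℕ) :
    s ! * ∏ i ∈ Icc 1 b, ((s + 2 * i) * (s + 2 * i - 1)) = (s + 2 * b)! := by
  induction b with
  | zero => simp
  | succ b ih =>
    rw [prod_Icc_succ_top (by omega), ← mul_assoc, ih,
      show s + 2 * (b + 1) = s + 2 * b + 1 + 1 by ring, Nat.factorial_succ, Nat.factorial_succ,
      show s + 2 * b + 1 + 1 - 1 = s + 2 * b + 1 by omega]
    ring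

theorem prod_range_prod_Icc_eq_prod_pow {M : Type*} [CommMonoid M] (g : ℕ → M) (r : ℕ) :
    ∏ b ∈ range r, ∏ i ∈ Icc 1 b, g i = ∏ i ∈ Icc 1 (r - 1), g i ^ (r - i) := by
  rw [prod_comm' (t' := Icc 1 (r - 1)) (s' := fun i => Ico i r) fun b i => by
    simp only [mem_range, mem_Icc, mem_Ico]; omega]
  exact prod_congr rfl fun i _ => by rw [prod_const, Nat.card_Ico]

theorem eval_taylor_ascPochhammer {n a b : ℕ} (hab : a ≤ n + b) :
    (taylor ((1 - 2 * a : ℚ) + (b : ℕ) * 2) (ascPochhammer ℚ (2 * a))).eval (2 * n : ℚ)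
      = (∏ i ∈ Icc 1 b, (((2 * n + 2 * i) * (2 * n + 2 * i - 1) : ℕ) : ℚ))
        * ((2 * n)! / (2 * (n + b - a))! : ℚ) := by
  set u := n + b - a
  have hshift : (2 * n + ((1 - 2 * a : ℚ) + b * 2)) = ((2 * u + 1 : ℕ) : ℚ) := by
    push_cast [u, Nat.cast_sub hab]; ring
  have hpoch : (2 * u)! * (2 * u + 1).ascFactorial (2 * a) = (2 * n + 2 * b)! := by
    rw [Nat.factorial_mul_ascFactorial]; congr 1; omega
  rw [taylor_eval, hshift, ← ascPochhammer_eval_cast, ascPochhammer_nat_eq_ascFactorial,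
    ← Nat.cast_prod, mul_div_assoc', eq_div_iff (by positivity), ← Nat.cast_mul,
    ← Nat.cast_mul, mul_comm, hpoch, ← Nat.factorial_mul_prod_consecutive_pairs, mul_comm ((2 * n)!)]

noncomputable def shiftedPochhammerDet (r : ℕ) : ℚ[X] :=
  (Matrix.of fun a b : Fin r =>
    taylor ((1 - 2 * (a : ℕ) : ℚ) + (b : ℕ) * 2) (ascPochhammer ℚ (2 * (a : ℕ)))).det

theorem natDegree_shiftedPochhammerDet_le (r : ℕ) :
    (shiftedPochhammerDet r).natDegree ≤ r * (r - 1) / 2 := by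
  refine (natDegree_det_taylor_le _ _ _).trans ?_
  have hrows :
      ∑ a : Fin r, (ascPochhammer ℚ (2 * (a : ℕ))).natDegree = 2 * (r * (r - 1) / 2) := by
    simp only [ascPochhammer_natDegree, ← mul_sum, Fin.sum_univ_eq_sum_range (fun a => a),
      sum_range_id]
  omega

theorem eval_shiftedPochhammerDet {r n : ℕ} (hrn : r ≤ n + 1) :
    (shiftedPochhammerDet r).eval (2 * n : ℚ)
      = (∏ i ∈ Icc 1 (r - 1), (((2 * n + 2 * i) * (2 * n + 2 * i - 1) : ℕ) : ℚ) ^ (r - i))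
        * (Matrix.of fun a b : Fin r =>
            ((2 * n)! / (2 * (n + (b : ℕ) - (a : ℕ)))! : ℚ)).det := by
  rw [shiftedPochhammerDet, ← coe_evalRingHom, RingHom.map_det]
  have hentries : (evalRingHom (2 * n : ℚ)).mapMatrix (Matrix.of fun a b : Fin r =>
        taylor ((1 - 2 * (a : ℕ) : ℚ) + (b : ℕ) * 2) (ascPochhammer ℚ (2 * (a : ℕ))))
      = Matrix.of fun a b : Fin r =>
        (∏ i ∈ Icc 1 (b : ℕ), (((2 * n + 2 * i) * (2 * n + 2 * i - 1) : ℕ) : ℚ))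
          * ((2 * n)! / (2 * (n + (b : ℕ) - (a : ℕ)))! : ℚ) := by
    ext a b
    exact eval_taylor_ascPochhammer (by omega)
  rw [hentries]
  refine (Matrix.det_mul_row _ _).trans ?_
  rw [Fin.prod_univ_eq_prod_range
    (fun b => ∏ i ∈ Icc 1 b, (((2 * n + 2 * i) * (2 * n + 2 * i - 1) : ℕ) : ℚ)),
    prod_range_prod_Icc_eq_prod_pow]
  rfl

theorem stmt_16_general (r : ℕ) :
    ∃ P : Polynomial ℚ, P.natDegree ≤ r * (r-1) ∧
      (∀ i : ℕ, i < r * (r-1) / 2 → P.coeff i = 0) ∧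
      ∀ n : ℕ, r < n →
        (((2*n : ℚ))^(r * (r-1)))⁻¹
            * (∏ i ∈ Finset.Icc 1 (r-1),
                (((2*n + 2*i) * (2*n + 2*i - 1) : ℕ) : ℚ)^(r - i))
            * Matrix.det (Matrix.of fun a b : Fin r =>
                (((2*n).factorial : ℚ) / ((2*(n + (b:ℕ) - (a:ℕ))).factorial : ℚ)))
          = P.eval (1 / (2*n : ℚ)) := by
  have hD := natDegree_shiftedPochhammerDet_le r
  refine ⟨(shiftedPochhammerDet r).reflect (r * (r - 1)), ?_, fun i hi => ?_, fun n hn => ?_⟩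
  · refine natDegree_le_iff_coeff_eq_zero.mpr fun i hi => ?_
    rw [coeff_reflect, revAt_eq_self_of_lt hi]
    exact coeff_eq_zero_of_natDegree_lt (by omega)
  · rw [coeff_reflect, revAt_le (by omega)]
    exact coeff_eq_zero_of_natDegree_lt (by omega)
  · have hx : (2 * n : ℚ) ≠ 0 := mul_ne_zero two_ne_zero (Nat.cast_ne_zero.mpr (by omega))
    have := invertibleOfNonzero hx
    have hreflect := eval₂_reflect_mul_pow (RingHom.id ℚ) (2 * n : ℚ) (r * (r - 1))
      (shiftedPochhammerDet r) (hD.trans (Nat.div_le_self _ _))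
    rw [eval₂_id, eval₂_id, invOf_eq_inv, eval_shiftedPochhammerDet (by omega)] at hreflect
    rw [one_div, eq_div_of_mul_eq (pow_ne_zero _ hx) hreflect]
    ring

theorem stmt_16 (r : ℕ) (hr : 2 ≤ r) :
    ∃ P : Polynomial ℚ, P.natDegree ≤ r * (r-1) ∧
      (∀ i : ℕ, i < r * (r-1) / 2 → P.coeff i = 0) ∧
      ∀ n : ℕ, r < n →
        (((2*n : ℚ))^(r * (r-1)))⁻¹
            * (∏ i ∈ Finset.Icc 1 (r-1),
                (((2*n + 2*i) * (2*n + 2*i - 1) : ℕ) : ℚ)^(r - i))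
            * Matrix.det (Matrix.of fun a b : Fin r =>
                (((2*n).factorial : ℚ) / ((2*(n + (b:ℕ) - (a:ℕ))).factorial : ℚ)))
          = P.eval (1 / (2*n : ℚ)) :=
  stmt_16_general r
end

section
/- For every integer r ≥ 1, the coefficient of y^(r(r-1)/2) in W_r(y) = det [(p_{i+j-1}(y))_{i,j=1,…,r}] equals (∏_{j=0}^{r-1} ((-1)^(j+1) (2j + 3) / j!)) · (det [((5 + 4i)^j)]_{i,j=0,…,r-1})^2. -/
/-!
Write `x_j = 5 + 4j` (`cvNode j`) and `A_j = (-1)^(j+1) (2j + 3) / j!` (`cvCoeff j`). As formal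
power series, `p_{n+1}(y) = e^y ∑_j A_j x_j^n y^j`: conjugation by `e^y` turns the operator
`4y d/dy + 5 - 4y` of the recurrence into `4y d/dy + 5`, which multiplies `y^j` by `x_j`, and
`e^{-y} (2y - 3) = ∑_j A_j y^j`. Hence, modulo a high power of `y`, the Hankel matrix
`(p_{a+b+1})` is `∑_{j<K} y^j (A_j e^y) v_j v_jᵀ` with `v_j = (x_j^a)_a`. Expanding its
determinant multilinearly in the rows, a tuple of indices `(j_a)_a` contributes `y^{∑ j_a}` times
the Vandermonde determinant of the `x_{j_a}`. That determinant vanishes unless the `j_a` are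
distinct, and distinct indices have `∑ j_a ≥ r(r-1)/2`, with equality only for the permutations of
`0, …, r-1`; the permutation terms add up to `∏_{j<r} A_j` times the squared Vandermonde
determinant of `x_0, …, x_{r-1}`.
-/

open Polynomial

open scoped PowerSeries

theorem Polynomial.coe_ofNat {R : Type*} [Semiring R] (n : ℕ) [n.AtLeastTwo] :
    ((ofNat(n) : R[X]) : R⟦X⟧) = ofNat(n) :=
  map_ofNat coeToPowerSeries.ringHom n

theorem Fin.val_le_of_strictMono {r : ℕ} {g : Fin r → ℕ} (hg : StrictMono g) (a : Fin r) :
    (a : ℕ) ≤ g a := by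
  obtain ⟨k, hk⟩ := a
  induction k with
  | zero => exact Nat.zero_le _
  | succ k ih => exact (ih (by omega)).trans_lt (hg (Fin.mk_lt_mk.2 k.lt_succ_self))

theorem sum_range_lt_sum_of_injective {r : ℕ} {f : Fin r → ℕ} (hf : Function.Injective f)
    {a : Fin r} (ha : r ≤ f a) : ∑ i ∈ Finset.range r, i < ∑ b, f b := by
  set σ := Tuple.sort f
  have hmono : StrictMono (f ∘ σ) :=
    (Tuple.monotone_sort f).strictMono_of_injective (hf.comp σ.injective)
  rw [← Fin.sum_univ_eq_sum_range, ← Equiv.sum_comp σ f]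
  refine Finset.sum_lt_sum (fun b _ => Fin.val_le_of_strictMono hmono b)
    ⟨σ.symm a, Finset.mem_univ _, ?_⟩
  simpa using (σ.symm a).isLt.trans_le ha

theorem exists_perm_of_injective_of_sum_le {r : ℕ} {f : Fin r → ℕ} (hf : Function.Injective f)
    (hsum : ∑ a, f a ≤ ∑ i ∈ Finset.range r, i) : ∃ σ : Equiv.Perm (Fin r), ∀ a, f a = σ a := by
  have hlt : ∀ a, f a < r := fun a =>
    not_le.1 fun ha => (sum_range_lt_sum_of_injective hf ha).not_ge hsum
  let g : Fin r → Fin r := fun a => ⟨f a, hlt a⟩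
  have hg : Function.Injective g := fun a b h => hf (congrArg Fin.val h)
  exact ⟨Equiv.ofBijective g (Finite.injective_iff_bijective.1 hg), fun _ => rfl⟩

namespace Matrix

theorem det_sub_det_mem {R : Type*} [CommRing R] {n : Type*} [Fintype n] [DecidableEq n]
    {I : Ideal R} {M N : Matrix n n R} (h : ∀ i j, M i j - N i j ∈ I) : M.det - N.det ∈ I := by
  rw [← Ideal.Quotient.eq, RingHom.map_det, RingHom.map_det]
  congr 1
  ext i j
  exact Ideal.Quotient.eq.2 (h i j)

theorem det_vandermonde_map {R S : Type*} [CommRing R] [CommRing S] (φ : R →+* S) {n : ℕ}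
    (v : Fin n → R) : (vandermonde (φ ∘ v)).det = φ (vandermonde v).det := by
  rw [RingHom.map_det]
  congr 1
  ext i j
  simp [vandermonde_apply]

theorem det_of_sum_pow_mul {S : Type*} [CommRing S] (r : ℕ) (x g : ℕ → S) (s : Finset ℕ) :
    (of fun a b : Fin r => ∑ j ∈ s, x j ^ ((a : ℕ) + b) * g j).det =
      ∑ f ∈ Fintype.piFinset fun _ : Fin r => s,
        (∏ a, x (f a) ^ (a : ℕ) * g (f a)) * (vandermonde (x ∘ f)).det := by
  have hrows : (of fun a b : Fin r => ∑ j ∈ s, x j ^ ((a : ℕ) + b) * g j) =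
      fun a : Fin r => ∑ j ∈ s, fun b : Fin r => x j ^ (a : ℕ) * g j * x j ^ (b : ℕ) := by
    ext a b
    simp only [of_apply, Finset.sum_apply, pow_add]
    exact Finset.sum_congr rfl fun _ _ => by ring
  rw [det, hrows]
  refine (detRowAlternating.toMultilinearMap.map_sum_finset _ _).trans
    (Finset.sum_congr rfl fun f _ => ?_)
  exact det_mul_column (fun a => x (f a) ^ (a : ℕ) * g (f a)) (vandermonde (x ∘ f))

end Matrix

namespace PowerSeries

open Finset Matrix

variable {R : Type*} [CommRing R]

theorem X_pow_dvd_mk_sub_sum (s : ℕ → R) (K : ℕ) :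
    X ^ K ∣ mk s - ∑ j ∈ range K, C (s j) * X ^ j :=
  X_pow_dvd_iff.2 fun d hd => by simp [hd]

theorem coeff_det_eq_of_X_pow_dvd_sub {n : Type*} [Fintype n] [DecidableEq n]
    {M M' : Matrix n n R⟦X⟧} {K N : ℕ} (hN : N < K) (h : ∀ i j, X ^ K ∣ M i j - M' i j) :
    coeff N M.det = coeff N M'.det := by
  obtain ⟨q, hq⟩ := Ideal.mem_span_singleton.1 <|
    det_sub_det_mem fun i j => Ideal.mem_span_singleton.2 (h i j)
  rw [← sub_eq_zero, ← map_sub, hq, coeff_X_pow_mul', if_neg hN.not_ge]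

theorem det_of_sum_X_pow_mul (x : ℕ → R) (u : ℕ → R⟦X⟧) (r K : ℕ) :
    (of fun a b : Fin r => ∑ j ∈ range K, C (x j) ^ ((a : ℕ) + b) * (X ^ j * u j)).det =
      ∑ f ∈ Fintype.piFinset fun _ : Fin r => range K,
        X ^ (∑ a, f a) * (C ((∏ a, x (f a) ^ (a : ℕ)) * (vandermonde (x ∘ f)).det) *
          ∏ a, u (f a)) := by
  refine (det_of_sum_pow_mul r (C ∘ x) (fun j => X ^ j * u j) (range K)).trans
    (sum_congr rfl fun f _ => ?_)
  rw [show (C ∘ x) ∘ f = C ∘ (x ∘ f) from rfl, det_vandermonde_map, prod_mul_distrib,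
    prod_mul_distrib, prod_pow_eq_pow_sum, map_mul, map_prod]
  simp only [Function.comp_apply, map_pow]
  ring

theorem coeff_X_pow_sum_mul_det_vandermonde_eq_zero (x : ℕ → R) (c : R) (φ : R⟦X⟧) {r : ℕ}
    {f : Fin r → ℕ} (hf : ∀ σ : Equiv.Perm (Fin r), (fun a => (σ a : ℕ)) ≠ f) :
    coeff (∑ i ∈ range r, i) (X ^ (∑ a, f a) * (C (c * (vandermonde (x ∘ f)).det) * φ)) = 0 := by
  by_cases hinj : Function.Injective f
  · have hlt : ∑ i ∈ range r, i < ∑ a, f a := not_le.1 fun hle => by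
      obtain ⟨σ, hσ⟩ := exists_perm_of_injective_of_sum_le hinj hle
      exact hf σ (funext fun a => (hσ a).symm)
    rw [coeff_X_pow_mul', if_neg hlt.not_ge]
  · obtain ⟨a, b, hab, hne⟩ := Function.not_injective_iff.1 hinj
    have : (vandermonde (x ∘ f)).det = 0 :=
      det_zero_of_row_eq hne (funext fun j => by simp [vandermonde_apply, hab])
    rw [this, mul_zero, map_zero, zero_mul, mul_zero, map_zero]

theorem coeff_det_of_sum_X_pow_mul (x : ℕ → R) (u : ℕ → R⟦X⟧) {r K : ℕ} (hrK : r ≤ K) :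
    coeff (∑ i ∈ range r, i)
        (of fun a b : Fin r => ∑ j ∈ range K, C (x j) ^ ((a : ℕ) + b) * (X ^ j * u j)).det =
      (∏ j ∈ range r, constantCoeff (u j)) * (vandermonde fun i : Fin r => x i).det ^ 2 := by
  set N := ∑ i ∈ range r, i
  set V := vandermonde fun i : Fin r => x i
  set e : Equiv.Perm (Fin r) → Fin r → ℕ := fun σ a => σ a
  set T : (Fin r → ℕ) → R := fun f =>
    coeff N (X ^ (∑ a, f a) * (C ((∏ a, x (f a) ^ (a : ℕ)) * (vandermonde (x ∘ f)).det) *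
      ∏ a, u (f a))) with hT
  have hperm : ∀ σ : Equiv.Perm (Fin r), T (e σ) =
      (∏ j ∈ range r, constantCoeff (u j)) * V.det *
        (((σ.sign : ℤ) : R) * ∏ a, x (σ a) ^ (a : ℕ)) := by
    intro σ
    have hsum : ∑ a, (σ a : ℕ) = N := by
      rw [Equiv.sum_comp σ (fun a => (a : ℕ)), Fin.sum_univ_eq_sum_range (fun i => i)]
    have hV : (vandermonde (x ∘ fun a => (σ a : ℕ))).det = σ.sign * V.det :=
      det_permute σ V
    simp only [hT, e, hsum, coeff_X_pow_mul', le_refl, if_true, Nat.sub_self,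
      coeff_zero_eq_constantCoeff_apply, map_mul, constantCoeff_C, map_prod, hV,
      Equiv.prod_comp σ (fun a => constantCoeff (u a)),
      Fin.prod_univ_eq_prod_range (fun j => constantCoeff (u j))]
    ring
  have hexpand : coeff N
      (of fun a b : Fin r => ∑ j ∈ range K, C (x j) ^ ((a : ℕ) + b) * (X ^ j * u j)).det =
      ∑ f ∈ Fintype.piFinset fun _ : Fin r => range K, T f := by
    rw [det_of_sum_X_pow_mul, map_sum]
  rw [hexpand, ← sum_of_injOn e
    (fun σ _ τ _ h => Equiv.ext fun a => Fin.val_injective (congrFun h a))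
    (fun σ _ => Fintype.mem_piFinset.2 fun a => mem_range.2 ((σ a).isLt.trans_le hrK))
    (fun f _ hf => coeff_X_pow_sum_mul_det_vandermonde_eq_zero x (∏ a, x (f a) ^ (a : ℕ))
      (∏ a, u (f a)) fun σ h => hf ⟨σ, mem_coe.2 (mem_univ σ), h⟩) (fun σ _ => (hperm σ).symm),
    ← mul_sum, sq, ← mul_assoc, det_apply' V]
  rfl

end PowerSeries

noncomputable def cvCoeff (j : ℕ) : ℝ := (-1) ^ (j + 1) * (2 * j + 3) / j.factorial

noncomputable def cvNode (j : ℕ) : ℝ := 5 + 4 * j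

theorem mk_cvCoeff : PowerSeries.mk cvCoeff =
    PowerSeries.evalNegHom (PowerSeries.exp ℝ) * (2 * PowerSeries.X - 3) := by
  set e := PowerSeries.evalNegHom (PowerSeries.exp ℝ)
  have he : ∀ j, PowerSeries.coeff j e = (-1) ^ j / j.factorial := fun j => by
    simp [e, PowerSeries.evalNegHom, PowerSeries.coeff_rescale, div_eq_mul_inv]
  rw [show e * (2 * PowerSeries.X - 3) =
      PowerSeries.C 2 * (e * PowerSeries.X) - PowerSeries.C 3 * e by simp only [map_ofNat]; ring]
  ext (_ | j)
  · simp only [PowerSeries.coeff_mk, map_sub, PowerSeries.coeff_C_mul,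
      PowerSeries.coeff_zero_mul_X, he]
    norm_num [cvCoeff]
  · simp only [PowerSeries.coeff_mk, map_sub, PowerSeries.coeff_C_mul,
      PowerSeries.coeff_succ_mul_X, he, cvCoeff, Nat.factorial_succ]
    push_cast
    field_simp
    ring

theorem coe_cv_eq_exp_mul (n : ℕ) :
    (cv n : ℝ⟦X⟧) = PowerSeries.exp ℝ * PowerSeries.mk (fun j => cvCoeff j * cvNode j ^ n) := by
  induction n with
  | zero =>
    simp only [pow_zero, mul_one, mk_cvCoeff, ← mul_assoc, PowerSeries.exp_mul_exp_neg_eq_one,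
      one_mul]
    simp [cv, Polynomial.coe_ofNat]
  | succ n ih =>
    set s := PowerSeries.mk (fun j => cvCoeff j * cvNode j ^ n)
    have hs : PowerSeries.C 4 * (PowerSeries.X * d⁄dX ℝ s) + PowerSeries.C 5 * s =
        PowerSeries.mk (fun j => cvCoeff j * cvNode j ^ (n + 1)) := by
      ext (_ | j) <;>
      simp only [map_add, PowerSeries.coeff_C_mul, PowerSeries.coeff_zero_X_mul,
        PowerSeries.coeff_succ_X_mul, PowerSeries.coeff_derivative, PowerSeries.coeff_mk, s,
        cvNode] <;>
      push_cast <;> ring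
    rw [cv, ← hs]
    simp only [Polynomial.coe_add, Polynomial.coe_mul, Polynomial.coe_sub, Polynomial.coe_X,
      Polynomial.coe_ofNat, ← PowerSeries.derivative_coe, ih, Derivation.leibniz,
      PowerSeries.derivative_exp, smul_eq_mul, map_ofNat]
    ring

theorem X_pow_dvd_coe_cv_sub (n K : ℕ) :
    PowerSeries.X ^ K ∣ (cv n : ℝ⟦X⟧) - ∑ j ∈ Finset.range K, PowerSeries.C (cvNode j) ^ n *
      (PowerSeries.X ^ j * (PowerSeries.C (cvCoeff j) * PowerSeries.exp ℝ)) := by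
  convert (PowerSeries.X_pow_dvd_mk_sub_sum (fun j => cvCoeff j * cvNode j ^ n) K).mul_left
    (PowerSeries.exp ℝ) using 1
  rw [coe_cv_eq_exp_mul, mul_sub, Finset.mul_sum]
  congr 1
  refine Finset.sum_congr rfl fun j _ => ?_
  simp only [map_mul, map_pow]
  ring

theorem stmt_17_general (r : ℕ) :
    (Matrix.det (Matrix.of fun a b : Fin r => cv ((a:ℕ) + (b:ℕ)))).coeff (r * (r-1) / 2)
      = (∏ j ∈ Finset.range r, ((-1 : ℝ)^(j+1) * (2*j + 3) / j.factorial))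
        * (Matrix.det (Matrix.of fun i j : Fin r => ((5 + 4*(i:ℕ) : ℝ))^(j:ℕ)))^2 := by
  set N := ∑ i ∈ Finset.range r, i
  have hN : r * (r - 1) / 2 = N := (Finset.sum_range_id r).symm
  set K := N + r + 1
  calc (Matrix.of fun a b : Fin r => cv ((a:ℕ) + (b:ℕ))).det.coeff (r * (r - 1) / 2)
      = PowerSeries.coeff N (Matrix.of fun a b : Fin r => (cv ((a:ℕ) + (b:ℕ)) : ℝ⟦X⟧)).det := by
        rw [hN, ← Polynomial.coeff_coe, ← coeToPowerSeries.ringHom_apply, RingHom.map_det]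
        rfl
    _ = PowerSeries.coeff N (Matrix.of fun a b : Fin r => ∑ j ∈ Finset.range K,
          PowerSeries.C (cvNode j) ^ ((a:ℕ) + b) *
            (PowerSeries.X ^ j * (PowerSeries.C (cvCoeff j) * PowerSeries.exp ℝ))).det :=
        PowerSeries.coeff_det_eq_of_X_pow_dvd_sub (by omega) fun a b => X_pow_dvd_coe_cv_sub _ K
    _ = _ := by
        rw [PowerSeries.coeff_det_of_sum_X_pow_mul cvNode _ (by omega)]
        simp only [map_mul, PowerSeries.constantCoeff_C, PowerSeries.constantCoeff_exp, mul_one]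
        rfl

theorem stmt_17 (r : ℕ) (hr : 1 ≤ r) :
    (Matrix.det (Matrix.of fun a b : Fin r => cv ((a:ℕ) + (b:ℕ)))).coeff (r * (r-1) / 2)
      = (∏ j ∈ Finset.range r, ((-1 : ℝ)^(j+1) * (2*j + 3) / j.factorial))
        * (Matrix.det (Matrix.of fun i j : Fin r => ((5 + 4*(i:ℕ) : ℝ))^(j:ℕ)))^2 :=
  stmt_17_general r
end
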